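/- Let ℓ ≥ 1 be an integer and let k, k' ∈ {π m/(ℓ+1) : m ∈ {1, …, ℓ}}. Then (2/(ℓ+1)) ∑_{x=1}^{ℓ} sin(x k) cos(x k) sin(x k') cos(x k') = (1/4)(δ_{k,k'} − δ_{k+k',π}), where δ denotes the Kronecker delta (δ_{a,b} = 1 if a = b and 0 otherwise). -/

import Mathlib

/-!
Since `sin a cos a sin b cos b = (cos (2a - 2b) - cos (2a + 2b)) / 8`, for `k = πm/(ℓ+1)` and
`k' = πm'/(ℓ+1)` the sum splits into two sums `∑_{x=1}^{ℓ} cos (2πjx/(ℓ+1))` with `j = m ∓ m'`.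
Together with the term `x = 0` such a sum is the real part of a geometric sum of an `(ℓ+1)`-st
root of unity, hence equals `ℓ + 1` if `(ℓ+1) ∣ j` and `0` otherwise. For `1 ≤ m, m' ≤ ℓ` the two
divisibilities mean `m = m'` and `m + m' = ℓ + 1`, that is `k = k'` and `k + k' = π`.
-/

open Real Finset

theorem Complex.exp_two_pi_mul_I_mul_intCast_div_eq_one_iff {k : ℤ} {N : ℕ} (hN : N ≠ 0) :
    Complex.exp (2 * π * Complex.I * k / N) = 1 ↔ (N : ℤ) ∣ k := by
  rw [Complex.exp_eq_one_iff]
  conv in _ = _ => rw [← mul_comm (2 * π * Complex.I), mul_div_assoc, mul_right_inj' (by simp)]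
  field_simp [Nat.cast_ne_zero.mpr hN]
  norm_cast

theorem geom_sum_eq_zero_of_pow_eq_one {K : Type*} [DivisionRing K] {ζ : K} {n : ℕ}
    (hζn : ζ ^ n = 1) (hζ : ζ ≠ 1) : ∑ i ∈ range n, ζ ^ i = 0 := by
  rw [geom_sum_eq hζ, hζn, sub_self, zero_div]

theorem sum_range_cos_two_pi_mul_div (N : ℕ) (j : ℤ) :
    ∑ x ∈ range N, cos (2 * π * j * x / N) = if (N : ℤ) ∣ j then (N : ℝ) else 0 := by
  rcases Nat.eq_zero_or_pos N with rfl | hN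
  · simp
  split_ifs with hj
  · obtain ⟨c, rfl⟩ := hj
    have hterm (x : ℕ) : cos (2 * π * ((N * c : ℤ) : ℝ) * x / N) = 1 := by
      rw [← cos_int_mul_two_pi (c * x)]
      congr 1
      push_cast
      field_simp
    simp only [hterm, sum_const, card_range, nsmul_eq_mul, mul_one]
  · set ζ := Complex.exp (2 * π * Complex.I * j / N)
    have hζN : ζ ^ N = 1 := by
      rw [← Complex.exp_nat_mul, ← Complex.exp_int_mul_two_pi_mul_I j]
      congr 1
      field_simp [Nat.cast_ne_zero.mpr hN.ne']
    have hζ : ζ ≠ 1 := by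
      rwa [Ne, Complex.exp_two_pi_mul_I_mul_intCast_div_eq_one_iff hN.ne']
    have hre (x : ℕ) : cos (2 * π * j * x / N) = (ζ ^ x).re := by
      rw [← Complex.exp_nat_mul, ← Complex.exp_ofReal_mul_I_re]
      congr 2
      push_cast
      ring
    simp_rw [hre, ← Complex.re_sum, geom_sum_eq_zero_of_pow_eq_one hζN hζ, Complex.zero_re]

theorem sum_Icc_cos_two_pi_mul_div (ℓ : ℕ) (j : ℤ) :
    ∑ x ∈ Icc 1 ℓ, cos (2 * π * j * x / ((ℓ : ℝ) + 1)) =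
      (if (ℓ + 1 : ℤ) ∣ j then (ℓ : ℝ) + 1 else 0) - 1 := by
  have h := sum_range_cos_two_pi_mul_div (ℓ + 1) j
  rw [range_eq_Ico, sum_eq_sum_Ico_succ_bot (by omega), Ico_add_one_right_eq_Icc] at h
  push_cast at h
  simp [← h]

theorem sin_mul_cos_mul_sin_mul_cos (a b : ℝ) :
    sin a * cos a * sin b * cos b = (cos (2 * a - 2 * b) - cos (2 * a + 2 * b)) / 8 := by
  rw [cos_sub, cos_add, sin_two_mul, sin_two_mul]
  ring

theorem sum_Icc_sin_cos_sin_cos_pi_mul_div {ℓ m m' : ℕ} (hm : m ∈ Icc 1 ℓ)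
    (hm' : m' ∈ Icc 1 ℓ) :
    ∑ x ∈ Icc 1 ℓ,
        sin (x * (π * m / (ℓ + 1))) * cos (x * (π * m / (ℓ + 1))) *
          sin (x * (π * m' / (ℓ + 1))) * cos (x * (π * m' / (ℓ + 1))) =
      ((ℓ : ℝ) + 1) / 8 * ((if m = m' then 1 else 0) - (if m + m' = ℓ + 1 then 1 else 0)) := by
  rw [mem_Icc] at hm hm'
  have hsub : (ℓ + 1 : ℤ) ∣ (m : ℤ) - m' ↔ m = m' := by
    refine ⟨fun h ↦ ?_, by rintro rfl; simp⟩
    have hmod : m' ≡ m [MOD ℓ + 1] := Nat.modEq_iff_dvd.2 (by exact_mod_cast h)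
    exact (hmod.eq_of_lt_of_lt (by omega) (by omega)).symm
  have hadd : (ℓ + 1 : ℤ) ∣ ((m + m' : ℕ) : ℤ) ↔ m + m' = ℓ + 1 := by
    refine ⟨fun h ↦ ?_, fun h ↦ by rw [h]; push_cast; rfl⟩
    exact Nat.eq_of_dvd_of_lt_two_mul (by omega) (by exact_mod_cast h) (by omega)
  have hterm (x : ℕ) :
      sin (x * (π * m / (ℓ + 1))) * cos (x * (π * m / (ℓ + 1))) *
          sin (x * (π * m' / (ℓ + 1))) * cos (x * (π * m' / (ℓ + 1))) =
        (cos (2 * π * ((m - m' : ℤ) : ℝ) * x / (ℓ + 1)) -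
          cos (2 * π * ((m + m' : ℕ) : ℤ) * x / (ℓ + 1))) / 8 := by
    rw [sin_mul_cos_mul_sin_mul_cos]
    congr 3 <;> push_cast <;> ring
  simp only [hterm, ← sum_div, sum_sub_distrib, sum_Icc_cos_two_pi_mul_div, hsub, hadd]
  split_ifs <;> ring

theorem trig_sum_sin_cos_sin_cos_general (ℓ : ℕ) (k k' : ℝ)
    (hk : ∃ m ∈ Finset.Icc 1 ℓ, k = π * (m : ℝ) / (ℓ + 1))
    (hk' : ∃ m ∈ Finset.Icc 1 ℓ, k' = π * (m : ℝ) / (ℓ + 1)) :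
    (2 / ((ℓ : ℝ) + 1)) * ∑ x ∈ Finset.Icc 1 ℓ,
        Real.sin ((x : ℝ) * k) * Real.cos ((x : ℝ) * k) *
          Real.sin ((x : ℝ) * k') * Real.cos ((x : ℝ) * k') =
      (1 / 4) * ((if k = k' then (1 : ℝ) else 0) -
        (if k + k' = π then (1 : ℝ) else 0)) := by
  obtain ⟨m, hm, rfl⟩ := hk
  obtain ⟨m', hm', rfl⟩ := hk'
  have hN : (ℓ : ℝ) + 1 ≠ 0 := by positivity
  have hdiag : π * m / (ℓ + 1) = π * m' / (ℓ + 1) ↔ m = m' := by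
    rw [div_left_inj' hN, mul_right_inj' pi_ne_zero, Nat.cast_inj]
  have hanti : π * m / (ℓ + 1) + π * m' / (ℓ + 1) = π ↔ m + m' = ℓ + 1 := by
    rw [← add_div, div_eq_iff hN, ← mul_add, mul_right_inj' pi_ne_zero]
    exact_mod_cast Iff.rfl
  rw [sum_Icc_sin_cos_sin_cos_pi_mul_div hm hm']
  simp only [hdiag, hanti]
  field_simp
  ring

/-- For momenta `k, k'` in the one-dimensional Dirichlet lattice
`{π m/(ℓ+1) : m ∈ {1,…,ℓ}}`,
`(2/(ℓ+1)) ∑_{x=1}^ℓ sin(xk) cos(xk) sin(xk') cos(xk') = (1/4)(δ_{k,k'} − δ_{k+k',π})`. -/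
theorem trig_sum_sin_cos_sin_cos (ℓ : ℕ) (hℓ : 1 ≤ ℓ) (k k' : ℝ)
    (hk : ∃ m ∈ Finset.Icc 1 ℓ, k = π * (m : ℝ) / (ℓ + 1))
    (hk' : ∃ m ∈ Finset.Icc 1 ℓ, k' = π * (m : ℝ) / (ℓ + 1)) :
    (2 / ((ℓ : ℝ) + 1)) * ∑ x ∈ Finset.Icc 1 ℓ,
        Real.sin ((x : ℝ) * k) * Real.cos ((x : ℝ) * k) *
          Real.sin ((x : ℝ) * k') * Real.cos ((x : ℝ) * k') =
      (1 / 4) * ((if k = k' then (1 : ℝ) else 0) -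
        (if k + k' = π then (1 : ℝ) else 0)) :=
  trig_sum_sin_cos_sin_cos_general ℓ k k' hk hk'
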